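/- Let φ : U → ℝ be smooth on an open set U ⊆ ℝⁿ with positive-definite Hessian, g_{ij} := ∂_i∂_j φ, and define G_{ij}(z) := g_{ij}(Re z) on the tube domain T_U. Then the Chern curvature tensor of the Kähler metric G satisfies, for all z ∈ T_U and all indices i,j,k,l: R^T_{i j̄ k l̄}(z) := −∂²G_{ij}/∂z^k∂z̄^l (z) + Σ_{p,q} g^{pq}(Re z) · (∂G_{iq}/∂z^k)(z) · (∂G_{pj}/∂z̄^l)(z) = −½ Q_{ijkl}(Re z), where Q_{ijkl} := ½ ∂_i∂_j∂_k∂_l φ − ½ Σ_{p,q} g^{pq} (∂_i∂_k∂_p φ)(∂_j∂_l∂_q φ) is the Hessian curvature tensor. -/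

import Mathlib

open Set Matrix

/-- Partial derivative in the `i`-th coordinate direction of a function on `ℝⁿ`. -/
noncomputable def pd (n : ℕ) (i : Fin n) (f : (Fin n → ℝ) → ℝ) (x : Fin n → ℝ) : ℝ :=
  fderiv ℝ f x (Pi.single i 1)

/-- The real part map `ℂⁿ → ℝⁿ` (the projection `π` of the tube domain). -/
def rePart (n : ℕ) (z : Fin n → ℂ) : Fin n → ℝ := fun k => (z k).re

/-- Wirtinger derivative `∂f/∂z^j = ½(∂f/∂x^j - i ∂f/∂y^j)`. -/
noncomputable def wdz (n : ℕ) (j : Fin n) (f : (Fin n → ℂ) → ℂ) (z : Fin n → ℂ) : ℂ :=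
  (1/2 : ℂ) * (fderiv ℝ f z (Pi.single j 1)
    - Complex.I * fderiv ℝ f z (Pi.single j Complex.I))

/-- Wirtinger derivative `∂f/∂z̄^j = ½(∂f/∂x^j + i ∂f/∂y^j)`. -/
noncomputable def wdzbar (n : ℕ) (j : Fin n) (f : (Fin n → ℂ) → ℂ) (z : Fin n → ℂ) : ℂ :=
  (1/2 : ℂ) * (fderiv ℝ f z (Pi.single j 1)
    + Complex.I * fderiv ℝ f z (Pi.single j Complex.I))

/-!
Since `G_{ij} = g_{ij} ∘ π` depends only on `Re z`, both Wirtinger derivatives of `G_{ij}` equal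
`½ (∂_k g_{ij}) ∘ π`. The Chern curvature therefore becomes the real expression
`-¼ ∂_k∂_l∂_i∂_jφ + ¼ Σ g^{pq} (∂_k∂_i∂_qφ)(∂_l∂_p∂_jφ)`, which is `-½ Q_{ijkl}` once the
partial derivatives of `φ` are reordered (they commute, `φ` being smooth on the open set `U`)
and the symmetry of `g⁻¹` is used to exchange `p` and `q`.
-/

section PartialDerivatives

variable {n : ℕ} {U : Set (Fin n → ℝ)}

theorem ContDiffOn.pd (hU : IsOpen U) {f : (Fin n → ℝ) → ℝ} (hf : ContDiffOn ℝ (⊤ : ℕ∞) f U)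
    (i : Fin n) : ContDiffOn ℝ (⊤ : ℕ∞) (pd n i f) U :=
  (ContinuousLinearMap.apply ℝ ℝ (Pi.single i (1 : ℝ))).contDiff.comp_contDiffOn
    (hf.fderiv_of_isOpen hU (by simp))

theorem Set.EqOn.pd (hU : IsOpen U) {f₁ f₂ : (Fin n → ℝ) → ℝ} (h : EqOn f₁ f₂ U) (i : Fin n) :
    EqOn (pd n i f₁) (pd n i f₂) U := fun x hx => by
  simp only [_root_.pd, (Filter.eventuallyEq_of_mem (hU.mem_nhds hx) h).fderiv_eq]

theorem pd_comm (hU : IsOpen U) {f : (Fin n → ℝ) → ℝ} (hf : ContDiffOn ℝ (⊤ : ℕ∞) f U)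
    (i j : Fin n) : EqOn (pd n i (pd n j f)) (pd n j (pd n i f)) U := by
  intro x hx
  have hsymm : IsSymmSndFDerivAt ℝ f x :=
    (hf.contDiffAt (hU.mem_nhds hx)).isSymmSndFDerivAt
      (by simp only [minSmoothness_of_isRCLikeNormedField]; exact WithTop.coe_le_coe.mpr le_top)
  have hdiff : DifferentiableAt ℝ (fderiv ℝ f) x :=
    ((hf.fderiv_of_isOpen hU (m := (⊤ : ℕ∞)) (by simp)).contDiffAt
      (hU.mem_nhds hx)).differentiableAt (by simp)
  have hsecond : ∀ a b : Fin n,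
      pd n a (pd n b f) x = fderiv ℝ (fderiv ℝ f) x (Pi.single a 1) (Pi.single b 1) := by
    intro a b
    unfold pd
    rw [fderiv_clm_apply hdiff (differentiableAt_const _)]
    simp
  rw [hsecond, hsecond, hsymm.eq]

end PartialDerivatives

section TubeLift

variable {n : ℕ}

def tubeLift (n : ℕ) (f : (Fin n → ℝ) → ℝ) (z : Fin n → ℂ) : ℂ := f (rePart n z)

noncomputable def rePartCLM (n : ℕ) : (Fin n → ℂ) →L[ℝ] (Fin n → ℝ) :=
  ContinuousLinearMap.pi fun k => Complex.reCLM.comp (ContinuousLinearMap.proj k)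

theorem rePartCLM_apply (z : Fin n → ℂ) : rePartCLM n z = rePart n z := rfl

theorem rePart_single_one (k : Fin n) : rePart n (Pi.single k 1) = Pi.single k 1 := by
  funext m
  simp [rePart, Pi.single_apply, apply_ite Complex.re]

theorem rePart_single_I (k : Fin n) : rePart n (Pi.single k Complex.I) = 0 := by
  funext m
  simp [rePart, Pi.single_apply, apply_ite Complex.re]

theorem hasFDerivAt_tubeLift {f : (Fin n → ℝ) → ℝ} {z : Fin n → ℂ}
    (hf : DifferentiableAt ℝ f (rePart n z)) :
    HasFDerivAt (tubeLift n f)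
      ((Complex.ofRealCLM.comp (fderiv ℝ f (rePart n z))).comp (rePartCLM n)) z :=
  Complex.ofRealCLM.hasFDerivAt.comp z (hf.hasFDerivAt.comp z (rePartCLM n).hasFDerivAt)

theorem wdz_tubeLift {f : (Fin n → ℝ) → ℝ} {z : Fin n → ℂ}
    (hf : DifferentiableAt ℝ f (rePart n z)) (k : Fin n) :
    wdz n k (tubeLift n f) z = tubeLift n (pd n k f) z / 2 := by
  simp only [wdz, (hasFDerivAt_tubeLift hf).fderiv, ContinuousLinearMap.comp_apply,
    rePartCLM_apply, rePart_single_one, rePart_single_I, Complex.ofRealCLM_apply, map_zero,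
    mul_zero, sub_zero, tubeLift, pd]
  ring

theorem wdzbar_tubeLift {f : (Fin n → ℝ) → ℝ} {z : Fin n → ℂ}
    (hf : DifferentiableAt ℝ f (rePart n z)) (k : Fin n) :
    wdzbar n k (tubeLift n f) z = tubeLift n (pd n k f) z / 2 := by
  simp only [wdzbar, (hasFDerivAt_tubeLift hf).fderiv, ContinuousLinearMap.comp_apply,
    rePartCLM_apply, rePart_single_one, rePart_single_I, Complex.ofRealCLM_apply, map_zero,
    mul_zero, add_zero, tubeLift, pd]
  ring

theorem wdz_congr {f₁ f₂ : (Fin n → ℂ) → ℂ} {z : Fin n → ℂ} (h : f₁ =ᶠ[nhds z] f₂) (k : Fin n) :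
    wdz n k f₁ z = wdz n k f₂ z := by
  simp only [wdz, h.fderiv_eq]

theorem wdz_div_const {f : (Fin n → ℂ) → ℂ} {z : Fin n → ℂ} (hf : DifferentiableAt ℝ f z)
    (c : ℂ) (k : Fin n) : wdz n k (fun w => f w / c) z = wdz n k f z / c := by
  simp only [div_eq_mul_inv, wdz, (hf.hasFDerivAt.mul_const c⁻¹).fderiv, _root_.smul_apply,
    smul_eq_mul]
  ring

theorem wdz_wdzbar_tubeLift {U : Set (Fin n → ℝ)} (hU : IsOpen U) {f : (Fin n → ℝ) → ℝ}
    (hf : DifferentiableOn ℝ f U) {z : Fin n → ℂ} (hz : rePart n z ∈ U)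
    (k l : Fin n) (hf' : DifferentiableAt ℝ (pd n l f) (rePart n z)) :
    wdz n k (wdzbar n l (tubeLift n f)) z = tubeLift n (pd n k (pd n l f)) z / 4 := by
  have hlift : wdzbar n l (tubeLift n f) =ᶠ[nhds z] fun w => tubeLift n (pd n l f) w / 2 := by
    filter_upwards [(hU.preimage (rePartCLM n).continuous).mem_nhds hz] with w hw
    exact wdzbar_tubeLift (hf.differentiableAt (hU.mem_nhds hw)) l
  rw [wdz_congr hlift, wdz_div_const (hasFDerivAt_tubeLift hf').differentiableAt,
    wdz_tubeLift hf']
  ring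

end TubeLift

section Curvature

variable {n : ℕ} {U : Set (Fin n → ℝ)} {φ : (Fin n → ℝ) → ℝ}

noncomputable def hessian (n : ℕ) (φ : (Fin n → ℝ) → ℝ) (x : Fin n → ℝ) :
    Matrix (Fin n) (Fin n) ℝ :=
  Matrix.of fun i j => pd n i (pd n j φ) x

noncomputable def hessianCurvature (n : ℕ) (φ : (Fin n → ℝ) → ℝ) (i j k l : Fin n)
    (x : Fin n → ℝ) : ℝ :=
  (1/2 : ℝ) * pd n i (pd n j (pd n k (pd n l φ))) x
    - (1/2 : ℝ) * ∑ p : Fin n, ∑ q : Fin n, (hessian n φ x)⁻¹ p q *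
        (pd n i (pd n k (pd n p φ)) x) * (pd n j (pd n l (pd n q φ)) x)

/-- The Chern curvature `R^T_{ij̄kl̄}` of the Kähler metric `G_{ij} = (∂_i∂_jφ) ∘ π` on the tube. -/
noncomputable def tubeCurvature (n : ℕ) (φ : (Fin n → ℝ) → ℝ) (i j k l : Fin n)
    (z : Fin n → ℂ) : ℂ :=
  -(wdz n k (wdzbar n l (tubeLift n (pd n i (pd n j φ)))) z)
    + ∑ p : Fin n, ∑ q : Fin n, (((hessian n φ (rePart n z))⁻¹ p q : ℝ) : ℂ)
        * wdz n k (tubeLift n (pd n i (pd n q φ))) z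
        * wdzbar n l (tubeLift n (pd n p (pd n j φ))) z

theorem hessian_isSymm (hU : IsOpen U) (hφ : ContDiffOn ℝ (⊤ : ℕ∞) φ U) {x : Fin n → ℝ}
    (hx : x ∈ U) : (hessian n φ x).IsSymm :=
  Matrix.ext fun i j => pd_comm hU hφ j i hx

theorem hessianCurvature_eq (hU : IsOpen U) (hφ : ContDiffOn ℝ (⊤ : ℕ∞) φ U)
    {x : Fin n → ℝ} (hx : x ∈ U) (i j k l : Fin n) :
    hessianCurvature n φ i j k l x =
      (1/2 : ℝ) * pd n k (pd n l (pd n i (pd n j φ))) x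
        - (1/2 : ℝ) * ∑ p : Fin n, ∑ q : Fin n, (hessian n φ x)⁻¹ p q *
            (pd n k (pd n i (pd n q φ)) x) * (pd n l (pd n p (pd n j φ)) x) := by
  have h4 : EqOn (pd n k (pd n l (pd n i (pd n j φ)))) (pd n i (pd n j (pd n k (pd n l φ)))) U :=
    ((EqOn.pd hU (pd_comm hU (hφ.pd hU j) l i) k).trans
      (pd_comm hU ((hφ.pd hU j).pd hU l) k i)).trans
    ((EqOn.pd hU (EqOn.pd hU (pd_comm hU hφ l j) k) i).trans
      (EqOn.pd hU (pd_comm hU (hφ.pd hU l) k j) i))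
  have h3_ik : ∀ p, pd n k (pd n i (pd n p φ)) x = pd n i (pd n k (pd n p φ)) x :=
    fun p => pd_comm hU (hφ.pd hU p) k i hx
  have h3_jl : ∀ q, pd n l (pd n q (pd n j φ)) x = pd n j (pd n l (pd n q φ)) x :=
    fun q => ((EqOn.pd hU (pd_comm hU hφ q j) l).trans (pd_comm hU (hφ.pd hU q) l j)) hx
  have hinv := (hessian_isSymm hU hφ hx).inv
  rw [hessianCurvature, h4 hx, Finset.sum_comm]
  simp only [h3_ik, h3_jl, hinv.apply]

theorem tubeCurvature_eq (hU : IsOpen U) (hφ : ContDiffOn ℝ (⊤ : ℕ∞) φ U) {z : Fin n → ℂ}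
    (hz : rePart n z ∈ U) (i j k l : Fin n) :
    tubeCurvature n φ i j k l z =
      ((-(1/2 : ℝ) * hessianCurvature n φ i j k l (rePart n z) : ℝ) : ℂ) := by
  have hφ2 : ∀ a b, ContDiffOn ℝ (⊤ : ℕ∞) (pd n a (pd n b φ)) U :=
    fun a b => (hφ.pd hU b).pd hU a
  have hdiffOn {f : (Fin n → ℝ) → ℝ} (hf : ContDiffOn ℝ (⊤ : ℕ∞) f U) :
      DifferentiableOn ℝ f U := hf.differentiableOn (by simp)
  have hdiff {f : (Fin n → ℝ) → ℝ} (hf : ContDiffOn ℝ (⊤ : ℕ∞) f U) :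
      DifferentiableAt ℝ f (rePart n z) := (hdiffOn hf).differentiableAt (hU.mem_nhds hz)
  rw [tubeCurvature, hessianCurvature_eq hU hφ hz,
    wdz_wdzbar_tubeLift hU (hdiffOn (hφ2 i j)) hz k l (hdiff ((hφ2 i j).pd hU l))]
  simp only [wdz_tubeLift (hdiff (hφ2 _ _)), wdzbar_tubeLift (hdiff (hφ2 _ _)), tubeLift]
  push_cast
  ring_nf
  simp only [← Finset.sum_mul]

end Curvature

theorem stmt10_general
    (n : ℕ) (U : Set (Fin n → ℝ)) (hU : IsOpen U)
    (φ : (Fin n → ℝ) → ℝ)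
    (hφ : ContDiffOn ℝ (⊤ : ℕ∞) φ U)
    -- the Hessian metric `g_{ij} = ∂_i∂_j φ`
    (g : (Fin n → ℝ) → Matrix (Fin n) (Fin n) ℝ)
    (hg : ∀ x, g x = Matrix.of (fun i j : Fin n => pd n i (pd n j φ) x))
    -- `G_{ij}(z) := g_{ij}(Re z)`
    (G : Fin n → Fin n → (Fin n → ℂ) → ℂ)
    (hG : ∀ i j : Fin n, ∀ w, G i j w = ((g (rePart n w) i j : ℝ) : ℂ))
    -- `Q_{ijkl} := ½ ∂_i∂_j∂_k∂_l φ - ½ Σ_{p,q} g^{pq} (∂_i∂_k∂_p φ)(∂_j∂_l∂_q φ)`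
    (Q : Fin n → Fin n → Fin n → Fin n → (Fin n → ℝ) → ℝ)
    (hQ : ∀ i j k l : Fin n, ∀ x, Q i j k l x =
      (1/2 : ℝ) * pd n i (pd n j (pd n k (pd n l φ))) x
        - (1/2 : ℝ) * ∑ p : Fin n, ∑ q : Fin n, (g x)⁻¹ p q *
            (pd n i (pd n k (pd n p φ)) x) * (pd n j (pd n l (pd n q φ)) x)) :
    ∀ z : Fin n → ℂ, rePart n z ∈ U → ∀ i j k l : Fin n,
      -(wdz n k (fun w => wdzbar n l (G i j) w) z)
        + ∑ p : Fin n, ∑ q : Fin n,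
            (((g (rePart n z))⁻¹ p q : ℝ) : ℂ) * wdz n k (G i q) z * wdzbar n l (G p j) z
      = ((-(1/2 : ℝ) * Q i j k l (rePart n z) : ℝ) : ℂ) := by
  intro z hz i j k l
  obtain rfl : g = hessian n φ := funext hg
  obtain rfl : G = fun i j => tubeLift n (pd n i (pd n j φ)) := by
    funext i j w
    exact hG i j w
  obtain rfl : Q = hessianCurvature n φ := by
    funext i j k l x
    exact hQ i j k l x
  exact tubeCurvature_eq hU hφ hz i j k l

/-- for a Hessian metric `g = D²φ` on open `U ⊆ ℝⁿ` and the Kähler metric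
`G_{ij}(z) := g_{ij}(Re z)` on the tube domain, the Chern curvature tensor satisfies
`R^T_{ij̄kl̄}(z) = -∂²G_{ij}/∂z^k∂z̄^l + Σ_{p,q} g^{pq}(Re z) (∂G_{iq}/∂z^k)(∂G_{pj}/∂z̄^l)
              = -½ Q_{ijkl}(Re z)`, where `Q` is the Hessian curvature tensor. -/
theorem stmt10
    (n : ℕ) (hn : 1 ≤ n) (U : Set (Fin n → ℝ)) (hU : IsOpen U) (hUne : U.Nonempty)
    (φ : (Fin n → ℝ) → ℝ)
    (hφ : ContDiffOn ℝ (⊤ : ℕ∞) φ U)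
    -- the Hessian metric `g_{ij} = ∂_i∂_j φ`
    (g : (Fin n → ℝ) → Matrix (Fin n) (Fin n) ℝ)
    (hg : ∀ x, g x = Matrix.of (fun i j : Fin n => pd n i (pd n j φ) x))
    (hpos : ∀ x ∈ U, (g x).PosDef)
    -- `G_{ij}(z) := g_{ij}(Re z)`
    (G : Fin n → Fin n → (Fin n → ℂ) → ℂ)
    (hG : ∀ i j : Fin n, ∀ w, G i j w = ((g (rePart n w) i j : ℝ) : ℂ))
    -- `Q_{ijkl} := ½ ∂_i∂_j∂_k∂_l φ - ½ Σ_{p,q} g^{pq} (∂_i∂_k∂_p φ)(∂_j∂_l∂_q φ)`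
    (Q : Fin n → Fin n → Fin n → Fin n → (Fin n → ℝ) → ℝ)
    (hQ : ∀ i j k l : Fin n, ∀ x, Q i j k l x =
      (1/2 : ℝ) * pd n i (pd n j (pd n k (pd n l φ))) x
        - (1/2 : ℝ) * ∑ p : Fin n, ∑ q : Fin n, (g x)⁻¹ p q *
            (pd n i (pd n k (pd n p φ)) x) * (pd n j (pd n l (pd n q φ)) x)) :
    ∀ z : Fin n → ℂ, rePart n z ∈ U → ∀ i j k l : Fin n,
      -(wdz n k (fun w => wdzbar n l (G i j) w) z)
        + ∑ p : Fin n, ∑ q : Fin n,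
            (((g (rePart n z))⁻¹ p q : ℝ) : ℂ) * wdz n k (G i q) z * wdzbar n l (G p j) z
      = ((-(1/2 : ℝ) * Q i j k l (rePart n z) : ℝ) : ℂ) :=
  stmt10_general n U hU φ hφ g hg G hG Q hQ
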